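/- Let p be a prime number and (A,+,∘) a left brace of cardinality p^n with p > n+1, and let a ∈ A. Then p·f(a) = a^{∘p}. Moreover, there exist integers α_1, …, α_{p−1} which depend only on the additive group (A,+) (not on a and not on the brace multiplication), with α_1 = 1, such that [a] = Σ_{i=1}^{p−1} α_i·[f_i(a)] in A/ann(p^2), where [f_1(a)] = [f(a)] and [f_{i+1}(a)] = [f(a)]⊙[f_i(a)]. -/

import Mathlib

universe u

/-- A left brace: `(A,+)` abelian group, `(A,∘)` a group, with
`a∘(b+c)+a = a∘b+a∘c`. -/
structure LeftBrace (A : Type u) [AddCommGroup A] where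
  circ : A → A → A
  one : A
  inv : A → A
  circ_assoc : ∀ a b c : A, circ (circ a b) c = circ a (circ b c)
  one_circ : ∀ a : A, circ one a = a
  circ_one : ∀ a : A, circ a one = a
  inv_circ : ∀ a : A, circ (inv a) a = one
  circ_add : ∀ a b c : A, circ a (b + c) + a = circ a b + circ a c

/-- `a*b = a∘b - a - b`. -/
def LeftBrace.star {A : Type u} [AddCommGroup A] (B : LeftBrace A) (a b : A) : A :=
  B.circ a b - a - b

/-- `ann(k) = {a : k•a = 0}`, as an additive subgroup. -/
def annSub (A : Type u) [AddCommGroup A] (k : ℕ) : AddSubgroup A where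
  carrier := {a : A | k • a = 0}
  zero_mem' := by simp
  add_mem' := by
    intro a b ha hb
    have ha' : k • a = 0 := ha
    have hb' : k • b = 0 := hb
    show k • (a + b) = 0
    rw [smul_add, ha', hb', add_zero]
  neg_mem' := by
    intro a ha
    have ha' : k • a = 0 := ha
    show k • (-a) = 0
    rw [smul_neg, ha', neg_zero]

/-- The coset `[a]` of `a` in `A/ann(k)`. -/
def qmk {A : Type u} [AddCommGroup A] (k : ℕ) (a : A) : A ⧸ annSub A k :=
  QuotientAddGroup.mk a

/-- Evaluation of a non-associative word under a binary operation `op`,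
substituting `f i` for the variable `i`. -/
def wEval {α : Type*} {β : Type*} (op : β → β → β) (f : α → β) : FreeMagma α → β
  | FreeMagma.of a => f a
  | FreeMagma.mul x y => op (wEval op f x) (wEval op f y)

/-- The list of leaves (occurrences of variables, left to right) of a word. -/
def wLeaves {α : Type*} : FreeMagma α → List α
  | FreeMagma.of a => [a]
  | FreeMagma.mul x y => wLeaves x ++ wLeaves y

/-- The last (rightmost) variable of a word. -/
def wLast {α : Type*} : FreeMagma α → α
  | FreeMagma.of a => a
  | FreeMagma.mul _ y => wLast y

/-- The number of occurrences of the variable `a` in a word. -/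
def wCount {α : Type*} [DecidableEq α] (a : α) : FreeMagma α → ℕ
  | FreeMagma.of b => if b = a then 1 else 0
  | FreeMagma.mul x y => wCount a x + wCount a y

/-- The length (number of variable occurrences) of a word. -/
def wLen {α : Type*} : FreeMagma α → ℕ
  | FreeMagma.of _ => 1
  | FreeMagma.mul x y => wLen x + wLen y

/-- Left-normed product `a₁·(a₂·(⋯(aₘ·b)⋯))`. -/
def leftProd {Q : Type*} (mul : Q → Q → Q) : List Q → Q → Q
  | [], b => b
  | a :: l, b => mul a (leftProd mul l b)

/-- `circPow B a k` is the product of `k` copies of `a` under `∘`. -/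
def circPow {A : Type u} [AddCommGroup A] (B : LeftBrace A) (a : A) : ℕ → A
  | 0 => B.one
  | k + 1 => B.circ a (circPow B a k)

/-- `eSeq B a (i-1)` is `a_i`, where `a_1 = a` and `a_{i+1} = a * a_i`. -/
def eSeq {A : Type u} [AddCommGroup A] (B : LeftBrace A) (a : A) : ℕ → A
  | 0 => a
  | i + 1 => B.star a (eSeq B a i)

/-- `starIter B a b (i-1)` is `e_i`, where `e_1 = a*b` and `e_{i+1} = a*e_i`. -/
def starIter {A : Type u} [AddCommGroup A] (B : LeftBrace A) (a b : A) : ℕ → A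
  | 0 => B.star a b
  | i + 1 => B.star a (starIter B a b i)

/-- `iterOp op u v i` is `u ⊙ (u ⊙ (⋯ (u ⊙ v)))` with `i` applications of `u ⊙ ·`. -/
def iterOp {Q : Type*} (op : Q → Q → Q) (u v : Q) : ℕ → Q
  | 0 => v
  | i + 1 => op u (iterOp op u v i)

/-- `f(a) = Σ_{i=1}^{p−1} (C(p−1,i−1)/i)·e_i` where `e_1 = a`, `e_{i+1} = a*e_i`. -/
def fMap {A : Type u} [AddCommGroup A] (B : LeftBrace A) (p : ℕ) (a : A) : A :=
  ∑ i ∈ Finset.Icc 1 (p - 1), (Nat.choose (p - 1) (i - 1) / i) • eSeq B a (i - 1)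

/-- `braceChainAux B (i-1)` is `A^i`: `A^1 = A`, `A^{i+1}` the additive subgroup
generated by `{x*y : x ∈ A, y ∈ A^i}`. -/
def braceChainAux {A : Type u} [AddCommGroup A] (B : LeftBrace A) : ℕ → AddSubgroup A
  | 0 => ⊤
  | i + 1 => AddSubgroup.closure {z : A | ∃ x : A, ∃ y ∈ braceChainAux B i, z = B.star x y}

/-- `dSeq B a b i = (d_i, d_i')`: `d_0 = a`, `d_0' = b`, `d_{i+1} = d_i + d_i'`,
`d_{i+1}' = d_i * d_i'`. -/
def dSeq {A : Type u} [AddCommGroup A] (B : LeftBrace A) (a b : A) : ℕ → A × A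
  | 0 => (a, b)
  | i + 1 => ((dSeq B a b i).1 + (dSeq B a b i).2, B.star (dSeq B a b i).1 (dSeq B a b i).2)

/-!
Write `λ_a x = a ∘ x - a` and `s_a = λ_a - 1`, so that `s_a x = a * x`. Since `a ↦ λ_a` is a
homomorphism from `(A, ∘)` to the additive endomorphisms, `λ_a ^ (p ^ n) = 1`; by the binomial
theorem `s_a ^ (p ^ n)` is then `p` times an endomorphism, so `s_a` is nilpotent, and as the images
of its powers strictly decrease in a group of order `p ^ n`, `s_a ^ n = 0`.

Everything then reduces to identities in `ℤ[X]` evaluated at `s_a`, modulo `X ^ n` with `n < p`.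
With `h = fPoly p = ∑_{j < p-1} C(p-1, j)/(j+1) X^j` we have `f(a) = h(s_a) a` and
`(1 + X) ^ p = 1 + p X h + X ^ p`. Hence `a^{∘p} = ∑_{j<p} λ_a^j a = p h(s_a) a` and
`(p f(a)) * w = (λ_a ^ p - 1) w = p (X h)(s_a) w`, so `[f_i(a)] = [((X h)^(i-1) h)(s_a) a]`.
Finally `h(0) = 1`, so `1 ≡ ∑ α_i (X h)^(i-1) h (mod X^(p-1))` for integers `α_i` depending only
on `p`, with `α_1 = 1`; evaluating at `s_a` on `a` gives the expansion of `[a]`.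
-/

open Polynomial

theorem Finset.sum_Icc_one_eq_sum_range {M : Type*} [AddCommMonoid M] (f : ℕ → M) (m : ℕ) :
    ∑ i ∈ Finset.Icc 1 m, f i = ∑ i ∈ Finset.range m, f (i + 1) := by
  rw [← Finset.Ico_add_one_right_eq_Icc, Finset.sum_Ico_eq_sum_range, Nat.add_sub_cancel]
  simp only [add_comm 1]

theorem Nat.Prime.mul_choose_pred_div {p j : ℕ} (hp : p.Prime) (hj : j + 1 < p) :
    p * ((p - 1).choose j / (j + 1)) = p.choose (j + 1) := by
  have hchoose := Nat.add_one_mul_choose_eq (p - 1) j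
  rw [Nat.sub_add_cancel hp.one_le] at hchoose
  have hcop : (j + 1).Coprime p :=
    Nat.coprime_comm.1 (hp.coprime_iff_not_dvd.2 (Nat.not_dvd_of_pos_of_lt (by omega) hj))
  have hdvd : j + 1 ∣ (p - 1).choose j :=
    hcop.dvd_of_dvd_mul_left ⟨_, hchoose.trans (mul_comm _ _)⟩
  rw [← Nat.mul_div_assoc _ hdvd, hchoose, Nat.mul_div_cancel _ j.succ_pos]

theorem AddSubgroup.card_mul_dvd_card_of_lt {G : Type*} [AddGroup G] {p n : ℕ} (hp : p.Prime)
    (hG : Nat.card G = p ^ n) {H K : AddSubgroup G} (hHK : H < K) :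
    Nat.card H * p ∣ Nat.card K := by
  have : Finite G := Nat.finite_of_card_ne_zero (by simp [hG, hp.ne_zero])
  obtain ⟨k, -, hk⟩ := (Nat.dvd_prime_pow hp).1 (hG ▸ K.card_addSubgroup_dvd_card)
  obtain ⟨j, hjk, hj⟩ := (Nat.dvd_prime_pow hp).1 (hk ▸ AddSubgroup.card_dvd_of_le hHK.le)
  have hjk_ne : j ≠ k :=
    fun e => hHK.ne (AddSubgroup.eq_of_le_of_card_ge hHK.le (by rw [hj, hk, e]))
  rw [hj, hk, ← pow_succ]
  exact pow_dvd_pow p (by omega)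

namespace AddMonoid.End
variable {M : Type*} [AddCommGroup M] {p n : ℕ}

theorem pow_eq_zero_of_isNilpotent (hp : p.Prime) (hM : Nat.card M = p ^ n)
    {N : AddMonoid.End M} (hN : IsNilpotent N) : N ^ n = 0 := by
  -- The ranges of the powers of `N` decrease strictly until they vanish, and each strict step
  -- divides the order by `p`.
  set R : ℕ → AddSubgroup M := fun i => (N ^ i : M →+ M).range
  have range_succ (i : ℕ) : R (i + 1) = (R i).map N :=
    (congrArg AddMonoidHom.range (pow_succ' N i)).trans (AddMonoidHom.range_comp N (N ^ i))
  have range_succ_le (i : ℕ) : R (i + 1) ≤ R i := by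
    rintro _ ⟨x, rfl⟩
    exact ⟨N x, by rw [pow_succ]; rfl⟩
  obtain ⟨m, hm⟩ := hN
  have eq_bot_of_succ_eq {i : ℕ} (hi : R (i + 1) = R i) : R i = ⊥ := by
    have stable (j : ℕ) : R (i + j) = R i := by
      induction j with
      | zero => rfl
      | succ j ih => rw [← add_assoc, range_succ, ih, ← range_succ, hi]
    rw [← stable m]
    exact AddMonoidHom.range_eq_bot_iff.2 (by rw [pow_add, hm, mul_zero]; rfl)
  have key (i : ℕ) : R i = ⊥ ∨ Nat.card (R i) * p ^ i ∣ p ^ n := by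
    induction i with
    | zero =>
      rw [pow_zero, mul_one, ← hM]
      exact .inr (AddSubgroup.card_addSubgroup_dvd_card _)
    | succ i ih =>
      by_cases hbot : R i = ⊥
      · exact .inl (le_bot_iff.1 (hbot ▸ range_succ_le i))
      refine .inr (dvd_trans ?_ (ih.resolve_left hbot))
      have hlt := lt_of_le_of_ne (range_succ_le i) (mt eq_bot_of_succ_eq hbot)
      rw [pow_succ, mul_comm (p ^ i), ← mul_assoc]
      exact mul_dvd_mul_right (AddSubgroup.card_mul_dvd_card_of_lt hp hM hlt) _
  refine AddMonoidHom.range_eq_bot_iff.1 ((key n).elim id fun h => ?_)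
  exact AddSubgroup.card_eq_one.1 <| Nat.dvd_one.1 <|
    Nat.dvd_of_mul_dvd_mul_right (pow_pos hp.pos n) (by rwa [one_mul])

theorem isNilpotent_sub_one (hp : p.Prime) (hM : Nat.card M = p ^ n) {k : ℕ}
    {T : AddMonoid.End M} (hT : T ^ p ^ k = 1) : IsNilpotent (T - 1) := by
  -- `T ^ p ^ k = ((T - 1) + 1) ^ p ^ k` exhibits `(T - 1) ^ p ^ k` as a multiple of `p`, and
  -- `p ^ n = 0` in `AddMonoid.End M`.
  obtain ⟨r, hr⟩ := (Commute.one_right (T - 1)).exists_add_pow_prime_pow_eq hp k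
  rw [sub_add_cancel, hT, one_pow, mul_one, mul_assoc, add_right_comm, eq_comm,
    add_eq_right] at hr
  have hp_pow : (p : AddMonoid.End M) ^ n = 0 := by
    ext x; simp [← Nat.cast_pow, ← hM, card_nsmul_eq_zero']
  refine ⟨p ^ k * n, ?_⟩
  rw [pow_mul, eq_neg_of_add_eq_zero_left hr, neg_pow, (Nat.cast_commute _ _).mul_pow,
    hp_pow, zero_mul, mul_zero]

end AddMonoid.End

theorem AddMonoid.End.finsetSum_apply {M ι : Type*} [AddCommMonoid M] (s : Finset ι)
    (f : ι → AddMonoid.End M) (x : M) : (∑ i ∈ s, f i) x = ∑ i ∈ s, f i x :=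
  AddMonoidHom.finsetSum_apply f s x

namespace Polynomial

theorem aeval_eq_of_X_pow_dvd_sub {R S : Type*} [CommRing R] [Ring S] [Algebra R S] {x : S}
    {m : ℕ} (hx : x ^ m = 0) {q q' : R[X]} (h : X ^ m ∣ q - q') : aeval x q = aeval x q' := by
  obtain ⟨r, hr⟩ := h
  rw [← sub_eq_zero, ← map_sub, hr, map_mul, map_pow, aeval_X, hx, zero_mul]

theorem exists_X_pow_dvd_sum_mul_sub_one {R : Type*} [CommRing R] {h : R[X]}
    (h0 : h.coeff 0 = 1) {m : ℕ} (hm : 1 ≤ m) :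
    ∃ α : ℕ → R, α 0 = 1 ∧ X ^ m ∣ (∑ i ∈ Finset.range m, C (α i) * (X * h) ^ i) * h - 1 := by
  induction m, hm using Nat.le_induction with
  | base => exact ⟨fun _ => 1, rfl, by simp [X_dvd_iff, h0]⟩
  | succ m hm ih =>
    obtain ⟨α, hα0, r, hr⟩ := ih
    have hX : X ∣ r - C (r.coeff 0) * h ^ (m + 1) := by
      rw [coeff_zero_eq_eval_zero] at h0
      simp [X_dvd_iff, coeff_zero_eq_eval_zero, h0]
    obtain ⟨s, hs⟩ := hX
    refine ⟨Function.update α m (-r.coeff 0),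
      by simp [Function.update_of_ne (by omega : 0 ≠ m), hα0], s, ?_⟩
    rw [Finset.sum_range_succ, Function.update_self, C_neg,
      Finset.sum_congr rfl fun i hi => by rw [Function.update_of_ne (Finset.mem_range.1 hi).ne]]
    linear_combination hr + X ^ m * hs

end Polynomial

theorem AddMonoid.End.aeval_C_mul_apply {M : Type*} [AddCommGroup M] (T : AddMonoid.End M)
    (c : ℤ) (q : ℤ[X]) (x : M) : aeval T (C c * q) x = c • aeval T q x := by
  rw [map_mul, aeval_C, algebraMap_int_eq, eq_intCast]
  rfl

theorem AddMonoid.End.sum_zsmul_aeval_apply {M : Type*} [AddCommGroup M] {T : AddMonoid.End M}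
    {m : ℕ} (hT : T ^ m = 0) {h : ℤ[X]} {β : ℕ → ℤ}
    (hβ : X ^ m ∣ (∑ i ∈ Finset.range m, C (β i) * (X * h) ^ i) * h - 1) (x : M) :
    ∑ i ∈ Finset.range m, β i • aeval T ((X * h) ^ i * h) x = x := by
  simpa only [map_one, Finset.sum_mul, mul_assoc, map_sum, AddMonoid.End.finsetSum_apply,
    AddMonoid.End.aeval_C_mul_apply, AddMonoid.End.one_apply]
    using congrArg (· x) (aeval_eq_of_X_pow_dvd_sub hT hβ)

noncomputable def fPoly (p : ℕ) : ℤ[X] :=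
  ∑ j ∈ Finset.range (p - 1), (((p - 1).choose j / (j + 1) : ℕ) : ℤ[X]) * X ^ j

theorem fPoly_coeff_zero {p : ℕ} (hp : p.Prime) : (fPoly p).coeff 0 = 1 := by
  obtain ⟨q, hq⟩ : ∃ q, p - 1 = q + 1 := ⟨p - 2, by have := hp.two_le; omega⟩
  simp [fPoly, hq, Finset.sum_range_succ', coeff_X_pow]

theorem one_add_X_pow_prime {p : ℕ} (hp : p.Prime) :
    (1 + X : ℤ[X]) ^ p = 1 + (p : ℤ[X]) * (X * fPoly p) + X ^ p := by
  have hmid : (p : ℤ[X]) * (X * fPoly p)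
      = ∑ j ∈ Finset.range (p - 1), (p.choose (j + 1) : ℤ[X]) * X ^ (j + 1) := by
    simp only [fPoly, Finset.mul_sum]
    refine Finset.sum_congr rfl fun j hj => ?_
    rw [← hp.mul_choose_pred_div (by rw [Finset.mem_range] at hj; omega)]
    push_cast
    ring
  obtain ⟨q, hq⟩ : ∃ q, p = q + 1 := ⟨p - 1, by have := hp.pos; omega⟩
  rw [hmid, add_comm 1 X, add_pow, hq, Finset.sum_range_succ, Finset.sum_range_succ',
    Nat.add_sub_cancel]
  simp [mul_comm, add_comm]

theorem geom_sum_one_add_X_prime {p : ℕ} (hp : p.Prime) :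
    ∑ j ∈ Finset.range p, (1 + X : ℤ[X]) ^ j = (p : ℤ[X]) * fPoly p + X ^ (p - 1) := by
  have hgeom := geom_sum_mul (1 + X : ℤ[X]) p
  rw [add_sub_cancel_left, one_add_X_pow_prime hp] at hgeom
  apply mul_left_cancel₀ (X_ne_zero (R := ℤ))
  rw [mul_comm, hgeom, mul_add, ← pow_succ', Nat.sub_add_cancel hp.one_le]
  ring

namespace LeftBrace
variable {A : Type u} [AddCommGroup A] (B : LeftBrace A)

theorem circ_zero (a : A) : B.circ a 0 = a := by
  simpa using (B.circ_add a 0 0).symm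

theorem one_eq_zero : B.one = 0 := by
  simpa [circ_zero] using B.one_circ 0

def lam (a : A) : AddMonoid.End A where
  toFun x := B.circ a x - a
  map_zero' := by simp [circ_zero]
  map_add' x y := by
    rw [eq_sub_of_add_eq (B.circ_add a x y)]
    abel

@[simp]
theorem lam_apply (a x : A) : B.lam a x = B.circ a x - a := rfl

theorem lam_one : B.lam B.one = 1 := by
  ext x
  rw [lam_apply, one_circ, one_eq_zero, sub_zero]
  rfl

theorem lam_circ (a b : A) : B.lam (B.circ a b) = B.lam a * B.lam b := by
  ext x
  change B.lam (B.circ a b) x = B.lam a (B.lam b x)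
  rw [lam_apply B b, map_sub, lam_apply, lam_apply, lam_apply, circ_assoc]
  abel

theorem lam_circPow (a : A) (k : ℕ) : B.lam (circPow B a k) = B.lam a ^ k := by
  induction k with
  | zero => exact B.lam_one
  | succ k ih => rw [circPow, lam_circ, ih, pow_succ']

theorem circPow_card (a : A) : circPow B a (Nat.card A) = B.one := by
  let : Mul A := ⟨B.circ⟩
  let : One A := ⟨B.one⟩
  let : Inv A := ⟨B.inv⟩
  let : Group A := Group.ofLeftAxioms B.circ_assoc B.one_circ B.inv_circ
  have circPow_eq_pow (k : ℕ) : circPow B a k = a ^ k := by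
    induction k with
    | zero => rfl
    | succ k ih => rw [pow_succ', ← ih]; rfl
  rw [circPow_eq_pow]
  exact pow_card_eq_one'

def starEnd (a : A) : AddMonoid.End A := B.lam a - 1

theorem starEnd_apply (a x : A) : B.starEnd a x = B.star a x := rfl

theorem lam_eq_starEnd_add_one (a : A) : B.lam a = B.starEnd a + 1 :=
  (sub_add_cancel _ _).symm

theorem starEnd_pow_eq_zero {p n m : ℕ} (hp : p.Prime) (hcard : Nat.card A = p ^ n)
    (hnm : n ≤ m) (a : A) : B.starEnd a ^ m = 0 :=
  pow_eq_zero_of_le hnm <| AddMonoid.End.pow_eq_zero_of_isNilpotent hp hcard <|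
    AddMonoid.End.isNilpotent_sub_one hp hcard (k := n) <| by
      rw [← hcard, ← lam_circPow, circPow_card, lam_one]

theorem circPow_eq_sum (a : A) (k : ℕ) :
    circPow B a k = ∑ j ∈ Finset.range k, (B.lam a ^ j) a := by
  induction k with
  | zero => exact B.one_eq_zero
  | succ k ih =>
    rw [Finset.sum_range_succ', pow_zero, circPow, ← sub_add_cancel (B.circ a _) a,
      ← lam_apply, ih, map_sum]
    simp only [pow_succ']
    rfl

theorem eSeq_eq (a : A) (j : ℕ) : eSeq B a j = (B.starEnd a ^ j) a := by
  induction j with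
  | zero => rfl
  | succ j ih => rw [eSeq, ih, ← starEnd_apply, pow_succ']; rfl

theorem fMap_eq_aeval (p : ℕ) (a : A) : fMap B p a = aeval (B.starEnd a) (fPoly p) a := by
  rw [fMap, Finset.sum_Icc_one_eq_sum_range, fPoly, map_sum, AddMonoid.End.finsetSum_apply]
  refine Finset.sum_congr rfl fun j _ => ?_
  simp [eSeq_eq]

variable {p n : ℕ}

theorem circPow_eq_smul_fMap (hp : p.Prime) (hnp : n < p) (hcard : Nat.card A = p ^ n)
    (a : A) :
    circPow B a p = p • fMap B p a := by
  have hN := B.starEnd_pow_eq_zero hp hcard (m := p - 1) (by omega) a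
  have hgeom := aeval_eq_of_X_pow_dvd_sub hN
    (q := ∑ j ∈ Finset.range p, (1 + X : ℤ[X]) ^ j) (q' := p * fPoly p)
    ⟨1, by rw [geom_sum_one_add_X_prime hp]; ring⟩
  calc circPow B a p = aeval (B.starEnd a) (∑ j ∈ Finset.range p, (1 + X : ℤ[X]) ^ j) a := by
        simp [circPow_eq_sum, map_sum, AddMonoid.End.finsetSum_apply, lam_eq_starEnd_add_one,
          add_comm]
    _ = p • fMap B p a := by
        rw [hgeom, fMap_eq_aeval]
        simp

theorem star_circPow_eq_smul_aeval (hp : p.Prime) (hnp : n < p) (hcard : Nat.card A = p ^ n)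
    (a w : A) :
    B.star (circPow B a p) w = p • aeval (B.starEnd a) (X * fPoly p) w := by
  have hN := B.starEnd_pow_eq_zero hp hcard hnp.le a
  have hbinom := aeval_eq_of_X_pow_dvd_sub hN
    (q := (1 + X : ℤ[X]) ^ p - 1) (q' := (p : ℤ[X]) * (X * fPoly p))
    ⟨1, by rw [one_add_X_pow_prime hp]; ring⟩
  calc B.star (circPow B a p) w = aeval (B.starEnd a) ((1 + X : ℤ[X]) ^ p - 1) w := by
        rw [← starEnd_apply, starEnd, lam_circPow, lam_eq_starEnd_add_one]
        simp [add_comm]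
    _ = p • aeval (B.starEnd a) (X * fPoly p) w := by
        rw [hbinom, map_mul, map_natCast]
        rfl

theorem iterOp_fMap_eq_aeval (hp : p.Prime) (hnp : n < p) (hcard : Nat.card A = p ^ n) {k : ℕ}
    {odot : A ⧸ annSub A k → A ⧸ annSub A k → A ⧸ annSub A k}
    (hodot : ∀ a b c : A, p • c = B.star (p • a) b → odot (qmk k a) (qmk k b) = qmk k c)
    (a : A) (i : ℕ) :
    iterOp odot (qmk k (fMap B p a)) (qmk k (fMap B p a)) i
      = qmk k (aeval (B.starEnd a) ((X * fPoly p) ^ i * fPoly p) a) := by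
  induction i with
  | zero => simp [iterOp, fMap_eq_aeval]
  | succ i ih =>
    rw [iterOp, ih]
    apply hodot
    rw [← circPow_eq_smul_fMap B hp hnp hcard, star_circPow_eq_smul_aeval B hp hnp hcard,
      pow_succ', mul_assoc, map_mul]
    rfl

end LeftBrace

/-- `p·f(a) = a^{∘p}`, and there are integers `α_1,…,α_{p−1}` depending only
on the additive group `(A,+)`, with `α_1 = 1`, such that `[a] = Σ_{i=1}^{p−1} α_i·[f_i(a)]`
in `A/ann(p²)`, where `[f_1(a)] = [f(a)]` and `[f_{i+1}(a)] = [f(a)]⊙[f_i(a)]`. -/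
theorem stmt_5 (p n : ℕ) (hp : p.Prime) (hpn : n + 1 < p)
    (A : Type u) [AddCommGroup A] (hcard : Nat.card A = p ^ n) :
    (∀ (B : LeftBrace A) (a : A), p • fMap B p a = circPow B a p) ∧
    ∃ α : ℕ → ℤ, α 1 = 1 ∧
      ∀ (B : LeftBrace A)
        (odot : (A ⧸ annSub A (p ^ 2)) → (A ⧸ annSub A (p ^ 2)) → (A ⧸ annSub A (p ^ 2))),
        (∀ a b c : A, p • c = B.star (p • a) b →
          odot (qmk (p ^ 2) a) (qmk (p ^ 2) b) = qmk (p ^ 2) c) →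
        ∀ a : A,
          qmk (p ^ 2) a = ∑ i ∈ Finset.Icc 1 (p - 1),
            α i • iterOp odot (qmk (p ^ 2) (fMap B p a)) (qmk (p ^ 2) (fMap B p a)) (i - 1) := by
  have hnp : n < p := by omega
  refine ⟨fun B a => (B.circPow_eq_smul_fMap hp hnp hcard a).symm, ?_⟩
  obtain ⟨β, hβ0, hβ⟩ := exists_X_pow_dvd_sum_mul_sub_one (fPoly_coeff_zero hp) (m := p - 1)
    (by omega)
  refine ⟨fun i => β (i - 1), hβ0, fun B odot hodot a => ?_⟩
  rw [Finset.sum_Icc_one_eq_sum_range]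
  simp only [Nat.add_sub_cancel, B.iterOp_fMap_eq_aeval hp hnp hcard hodot]
  conv_lhs => rw [← AddMonoid.End.sum_zsmul_aeval_apply
    (B.starEnd_pow_eq_zero hp hcard (m := p - 1) (by omega) a) hβ a]
  simp only [qmk, QuotientAddGroup.mk_sum, QuotientAddGroup.mk_zsmul]
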